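/- arXiv:math/0610030 — 2 statements merged into one kernel-verified Lean document; each statement's English description precedes it below -/
import Mathlib

section
/- Let A = {a₁ < ⋯ < a_k} be a finite set of positive integers with k ≥ 2, let A' = A ∖ {a₁}, and let ψ = τ-1-ν be a shuffle pattern whose middle letter 1 is strictly smaller than every letter of the nonempty words τ and ν. Then in ℚ⟦x,y⟧: C_ψ^A(x,y)·(1 − x^{a₁} y·C_τ^{A'}(x,y))·(1 − x^{a₁} y·C_ν^{A'}(x,y)) = C_ψ^{A'}(x,y) − x^{a₁} y·C_τ^{A'}(x,y)·C_ν^{A'}(x,y). -/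
/-- A composition of `n` with `m` parts, all parts in `A`. -/
def IsCompOf (A : Finset ℕ) (n m : ℕ) (σ : List ℕ) : Prop :=
  (∀ x ∈ σ, x ∈ A) ∧ σ.sum = n ∧ σ.length = m

/-- The contiguous factor of `σ` of length `w.length` starting at position `i` is
order-isomorphic to the word `w`. -/
def WordIsoAt (w σ : List ℕ) (i : ℕ) : Prop :=
  i + w.length ≤ σ.length ∧ ∀ s t : ℕ, s < w.length → t < w.length →
    (w.getD s 0 < w.getD t 0 ↔ σ.getD (i + s) 0 < σ.getD (i + t) 0)

/-- `σ` avoids the word `w` (as a consecutive pattern). -/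
def AvoidsWord (w σ : List ℕ) : Prop := ∀ i : ℕ, ¬ WordIsoAt w σ i

/-- An occurrence of the shuffle pattern `τ-1-ν` (middle letter smaller than all
letters of `τ` and `ν`) in `σ`: a contiguous factor order-isomorphic to `τ`, then
(strictly later) a single letter strictly smaller than every letter of the two
factors, then (strictly later) a contiguous factor order-isomorphic to `ν`. -/
def ShuffleBotOccurs (τ ν σ : List ℕ) : Prop :=
  ∃ i p j : ℕ, WordIsoAt τ σ i ∧ i + τ.length ≤ p ∧ p + 1 ≤ j ∧ WordIsoAt ν σ j ∧
    (∀ s : ℕ, s < τ.length → σ.getD p 0 < σ.getD (i + s) 0) ∧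
    (∀ t : ℕ, t < ν.length → σ.getD p 0 < σ.getD (j + t) 0)

/-!
Cut a composition `σ` over `A` at the first occurrence of its smallest part `a = min A`:
`σ = w ++ a :: ρ` with `w` over `A' = A \ {a}` (all letters `> a`) and `ρ` over `A`. An
occurrence of `τ-1-ν` in `σ` lies in `w`, lies in `ρ`, or has its `τ`-factor in `w` and its
`ν`-factor in `ρ`; since `a` can then serve as middle letter, the last case happens exactly
when `w` contains `τ` and `ρ` contains an occurrence of `ν` lying above `a`. Writing `z = x^a y`
and `H` for the generating function of compositions over `A` with no occurrence of `ν` above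
`a`, this gives `H = C_ν^{A'} + z C_ν^{A'} H` and
`C_ψ^A = C_ψ^{A'} + z C_τ^{A'} C_ψ^A + z (C_ψ^{A'} - C_τ^{A'}) H`; eliminating `H` yields the
identity.
-/
open MvPowerSeries Finset.HasAntidiagonal

lemma List.getD_mem {α : Type*} {l : List α} {n : ℕ} (d : α) (h : n < l.length) :
    l.getD n d ∈ l := by
  rw [List.getD_eq_getElem _ _ h]
  exact List.getElem_mem h

lemma List.getD_append_length_add {α : Type*} (l ρ : List α) (j : ℕ) (d : α) :
    (l ++ ρ).getD (l.length + j) d = ρ.getD j d := by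
  rw [List.getD_append_right _ _ _ _ (by omega), Nat.add_sub_cancel_left]

lemma List.eq_and_eq_of_append_cons_eq {α : Type*} [DecidableEq α] {a : α} {w w' ρ ρ' : List α}
    (hw : a ∉ w) (hw' : a ∉ w') (h : w ++ a :: ρ = w' ++ a :: ρ') : w = w' ∧ ρ = ρ' := by
  have hsplit := congrArg (List.splitOn a) h
  rw [List.splitOn_append_cons_self_of_not_mem hw,
    List.splitOn_append_cons_self_of_not_mem hw'] at hsplit
  obtain rfl := (List.cons.inj hsplit).1
  exact ⟨rfl, (List.cons.inj (List.append_cancel_left h)).2⟩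

lemma Set.ncard_eq_sum_ncard_inter_preimage {α β : Type*} [DecidableEq β] {s : Set α}
    (hs : s.Finite) {f : α → β} {t : Finset β} (hf : ∀ a ∈ s, f a ∈ t) :
    s.ncard = ∑ b ∈ t, (s ∩ f ⁻¹' {b}).ncard := by
  rw [Set.ncard_eq_toFinset_card s hs, Finset.card_eq_sum_card_fiberwise
    (fun a ha => hf a (hs.mem_toFinset.mp ha))]
  refine Finset.sum_congr rfl fun b _ => ?_
  rw [Set.ncard_eq_toFinset_card _ (hs.subset Set.inter_subset_left)]
  congr 1
  ext
  simp

noncomputable def wordWeight (σ : List ℕ) : Fin 2 →₀ ℕ :=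
  Finsupp.single 0 σ.sum + Finsupp.single 1 σ.length

lemma wordWeight_eq_iff {σ : List ℕ} {n m : ℕ} :
    wordWeight σ = Finsupp.single 0 n + Finsupp.single 1 m ↔ σ.sum = n ∧ σ.length = m := by
  simp [wordWeight, Finsupp.ext_iff, Fin.forall_fin_two]

lemma wordWeight_append (w ρ : List ℕ) : wordWeight (w ++ ρ) = wordWeight w + wordWeight ρ := by
  simp only [wordWeight, List.sum_append, List.length_append, Finsupp.single_add]
  abel

lemma wordWeight_append_cons (w ρ : List ℕ) (a : ℕ) :
    wordWeight (w ++ a :: ρ) = wordWeight [a] + (wordWeight w + wordWeight ρ) := by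
  rw [← List.singleton_append, wordWeight_append, wordWeight_append]
  abel

lemma finite_wordWeight_le (d : Fin 2 →₀ ℕ) : {σ : List ℕ | wordWeight σ ≤ d}.Finite := by
  refine ((List.finite_length_le (Fin (d 0 + 1)) (d 1)).image (List.map Fin.val)).subset ?_
  intro σ hσ
  have hsum : σ.sum ≤ d 0 := by simpa [wordWeight] using hσ 0
  have hlen : σ.length ≤ d 1 := by simpa [wordWeight] using hσ 1
  refine ⟨σ.attach.map fun x => ⟨x.1, Nat.lt_succ_of_le ((List.le_sum_of_mem x.2).trans hsum)⟩,
    by simpa using hlen, ?_⟩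
  simp only [List.map_map]
  exact List.attach_map_subtype_val σ

noncomputable def wordGF (S : Set (List ℕ)) : MvPowerSeries (Fin 2) ℚ :=
  fun d => ((S ∩ wordWeight ⁻¹' {d}).ncard : ℚ)

lemma coeff_wordGF (S : Set (List ℕ)) (d : Fin 2 →₀ ℕ) :
    coeff d (wordGF S) = ((S ∩ wordWeight ⁻¹' {d}).ncard : ℚ) := rfl

lemma finite_inter_wordWeight_eq (S : Set (List ℕ)) (d : Fin 2 →₀ ℕ) :
    (S ∩ wordWeight ⁻¹' {d}).Finite :=
  (finite_wordWeight_le d).subset fun _ h => le_of_eq h.2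

lemma wordGF_union {S T : Set (List ℕ)} (h : Disjoint S T) :
    wordGF (S ∪ T) = wordGF S + wordGF T := by
  ext d
  rw [map_add, coeff_wordGF, coeff_wordGF, coeff_wordGF, Set.union_inter_distrib_right,
    Set.ncard_union_eq (h.mono Set.inter_subset_left Set.inter_subset_left)
      (finite_inter_wordWeight_eq _ _) (finite_inter_wordWeight_eq _ _), Nat.cast_add]

lemma wordGF_diff {S T : Set (List ℕ)} (h : T ⊆ S) : wordGF (S \ T) = wordGF S - wordGF T := by
  rw [eq_sub_iff_add_eq, ← wordGF_union Set.disjoint_sdiff_left, Set.sdiff_union_of_subset h]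

lemma coeff_wordGF_mul (S T : Set (List ℕ)) (d : Fin 2 →₀ ℕ) :
    coeff d (wordGF S * wordGF T) =
      (((S ×ˢ T) ∩ (fun q => wordWeight q.1 + wordWeight q.2) ⁻¹' {d}).ncard : ℚ) := by
  classical
  have hfin : ((S ×ˢ T) ∩ (fun q => wordWeight q.1 + wordWeight q.2) ⁻¹' {d}).Finite := by
    refine ((finite_wordWeight_le d).prod (finite_wordWeight_le d)).subset ?_
    rintro q ⟨-, hq⟩
    exact ⟨(le_self_add : wordWeight q.1 ≤ _).trans_eq hq,
      (le_add_self : wordWeight q.2 ≤ _).trans_eq hq⟩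
  rw [coeff_mul, Set.ncard_eq_sum_ncard_inter_preimage hfin
    (f := fun q => (wordWeight q.1, wordWeight q.2)) (t := antidiagonal d)
    (fun q hq => mem_antidiagonal.2 hq.2), Nat.cast_sum]
  refine Finset.sum_congr rfl fun p hp => ?_
  rw [coeff_wordGF, coeff_wordGF, ← Nat.cast_mul, ← Set.ncard_prod]
  rw [mem_antidiagonal] at hp
  congr 2
  ext ⟨w, ρ⟩
  simp only [Set.mem_inter_iff, Set.mem_prod, Set.mem_preimage, Set.mem_singleton_iff,
    Prod.ext_iff]
  constructor
  · rintro ⟨⟨hw, h1⟩, hρ, h2⟩; exact ⟨⟨⟨hw, hρ⟩, by rw [h1, h2, hp]⟩, h1, h2⟩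
  · rintro ⟨⟨⟨hw, hρ⟩, -⟩, h1, h2⟩; exact ⟨⟨hw, h1⟩, hρ, h2⟩

lemma X_pow_mul_X (a : ℕ) :
    (X 0 : MvPowerSeries (Fin 2) ℚ) ^ a * X 1 = monomial (wordWeight [a]) 1 := by
  rw [X_pow_eq, X_def, monomial_mul_monomial, mul_one]
  simp [wordWeight]

lemma wordGF_image2_append_cons {a : ℕ} {S T : Set (List ℕ)} (hS : ∀ w ∈ S, a ∉ w) :
    wordGF (Set.image2 (fun w ρ => w ++ a :: ρ) S T) =
      X 0 ^ a * X 1 * (wordGF S * wordGF T) := by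
  ext d
  have hinj : Set.InjOn (Function.uncurry fun w ρ => w ++ a :: ρ) (S ×ˢ T) :=
    fun q hq q' hq' h =>
      Prod.ext_iff.2 (List.eq_and_eq_of_append_cons_eq (hS _ hq.1) (hS _ hq'.1) h)
  rw [X_pow_mul_X, coeff_monomial_mul, coeff_wordGF, ← Set.image_uncurry_prod,
    ← Set.image_inter_preimage, (hinj.mono Set.inter_subset_left).ncard_image]
  split_ifs with hle
  · rw [one_mul, coeff_wordGF_mul]
    congr 3
    ext ⟨w, ρ⟩
    simp only [Set.mem_preimage, Set.mem_singleton_iff, Function.uncurry_apply_pair,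
      wordWeight_append_cons, eq_tsub_iff_add_eq_of_le hle, add_comm (wordWeight [a])]
  · have hempty :
        S ×ˢ T ∩ (Function.uncurry fun w ρ => w ++ a :: ρ) ⁻¹' (wordWeight ⁻¹' {d}) = ∅ :=
      Set.eq_empty_of_forall_notMem fun q hq =>
        hle (le_self_add.trans_eq ((wordWeight_append_cons _ _ _).symm.trans hq.2))
    rw [hempty, Set.ncard_empty, Nat.cast_zero]

lemma disjoint_image2_append_cons {a : ℕ} {S S' T T' : Set (List ℕ)} (hS : ∀ w ∈ S, a ∉ w)
    (hS' : ∀ w ∈ S', a ∉ w) (h : Disjoint S S') :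
    Disjoint (Set.image2 (fun w ρ => w ++ a :: ρ) S T)
      (Set.image2 (fun w ρ => w ++ a :: ρ) S' T') := by
  rw [Set.disjoint_left]
  rintro _ ⟨w, hw, ρ, -, rfl⟩ ⟨w', hw', ρ', -, he⟩
  obtain rfl := (List.eq_and_eq_of_append_cons_eq (hS' w' hw') (hS w hw) he).1
  exact Set.disjoint_left.1 h hw hw'

def wordsOver (A : Finset ℕ) : Set (List ℕ) := {σ | ∀ x ∈ σ, x ∈ A}

lemma eq_wordGF_of_coeff {F : MvPowerSeries (Fin 2) ℚ} {A : Finset ℕ} {P : List ℕ → Prop}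
    (h : ∀ n m : ℕ, coeff (Finsupp.single 0 n + Finsupp.single 1 m) F =
      (Set.ncard {σ : List ℕ | IsCompOf A n m σ ∧ P σ} : ℚ)) :
    F = wordGF (wordsOver A ∩ {σ | P σ}) := by
  ext d
  have hd : d = Finsupp.single 0 (d 0) + Finsupp.single 1 (d 1) := by
    ext i; fin_cases i <;> simp
  rw [hd, h, coeff_wordGF]
  congr 2
  ext σ
  simp only [IsCompOf, Set.mem_ofPred_eq, Set.mem_inter_iff, Set.mem_preimage,
    Set.mem_singleton_iff, wordsOver, wordWeight_eq_iff]
  tauto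

lemma notMem_of_mem_wordsOver_erase {A : Finset ℕ} {a : ℕ} {σ : List ℕ}
    (hσ : σ ∈ wordsOver (A.erase a)) : a ∉ σ :=
  fun h => Finset.notMem_erase a A (hσ a h)

lemma wordsOver_eq_union {A : Finset ℕ} {a : ℕ} (ha : a ∈ A) :
    wordsOver A = wordsOver (A.erase a) ∪
      Set.image2 (fun w ρ => w ++ a :: ρ) (wordsOver (A.erase a)) (wordsOver A) := by
  ext σ
  simp only [Set.mem_union, Set.mem_image2, wordsOver, Set.mem_ofPred_eq, Finset.mem_erase]
  constructor
  · intro hσ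
    by_cases haσ : a ∈ σ
    · obtain ⟨w, ρ, haw, rfl, -⟩ := List.exists_erase_eq haσ
      refine Or.inr ⟨w, fun x hx => ⟨?_, hσ x (by simp [hx])⟩, ρ,
        fun x hx => hσ x (by simp [hx]), rfl⟩
      rintro rfl
      exact haw hx
    · exact Or.inl fun x hx => ⟨fun h => haσ (h ▸ hx), hσ x hx⟩
  · rintro (hσ | ⟨w, hw, ρ, hρ, rfl⟩) x hx
    · exact (hσ x hx).2
    · simp only [List.mem_append, List.mem_cons] at hx
      rcases hx with hx | rfl | hx
      exacts [(hw x hx).2, ha, hρ x hx]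

lemma disjoint_wordsOver_erase_image2 {A : Finset ℕ} {a : ℕ} (S T : Set (List ℕ)) :
    Disjoint (wordsOver (A.erase a)) (Set.image2 (fun w ρ => w ++ a :: ρ) S T) := by
  rw [Set.disjoint_right]
  rintro _ ⟨w, -, ρ, -, rfl⟩ hσ
  exact notMem_of_mem_wordsOver_erase hσ (by simp)

section Occurrences

variable {v w l ρ τ ν σ : List ℕ} {a c i j k p : ℕ}

lemma wordIsoAt_append_right_iff (h : i + v.length ≤ w.length) :
    WordIsoAt v (w ++ l) i ↔ WordIsoAt v w i := by
  refine and_congr (by simp; omega) (forall₄_congr fun s t hs ht => ?_)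
  rw [List.getD_append _ _ _ _ (by omega), List.getD_append _ _ _ _ (by omega)]

lemma WordIsoAt.append_right (h : WordIsoAt v w i) (l : List ℕ) : WordIsoAt v (w ++ l) i :=
  (wordIsoAt_append_right_iff h.1).2 h

lemma wordIsoAt_append_left_iff :
    WordIsoAt v (l ++ ρ) (l.length + j) ↔ WordIsoAt v ρ j := by
  refine and_congr (by simp; omega) (forall₄_congr fun s t hs ht => ?_)
  rw [Nat.add_assoc, Nat.add_assoc, List.getD_append_length_add, List.getD_append_length_add]

def FactorAbove (c : ℕ) (σ : List ℕ) (i k : ℕ) : Prop := ∀ t < k, c < σ.getD (i + t) 0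

lemma factorAbove_append_right_iff (h : i + k ≤ w.length) :
    FactorAbove c (w ++ l) i k ↔ FactorAbove c w i k :=
  forall₂_congr fun t ht => by rw [List.getD_append _ _ _ _ (by omega)]

lemma factorAbove_append_left_iff :
    FactorAbove c (l ++ ρ) (l.length + j) k ↔ FactorAbove c ρ j k :=
  forall₂_congr fun t ht => by rw [Nat.add_assoc, List.getD_append_length_add]

lemma FactorAbove.mono {c' : ℕ} (h : FactorAbove c σ i k) (hc : c' ≤ c) :
    FactorAbove c' σ i k :=
  fun t ht => hc.trans_lt (h t ht)

lemma factorAbove_of_forall_lt (h : ∀ x ∈ σ, c < x) (hk : i + k ≤ σ.length) :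
    FactorAbove c σ i k :=
  fun t ht => h _ (List.getD_mem 0 (by omega))

lemma FactorAbove.le_or_le_of_append_cons (h : FactorAbove a (w ++ a :: ρ) i k) :
    i + k ≤ w.length ∨ w.length + 1 ≤ i := by
  by_contra! hc
  have := h (w.length - i) (by omega)
  rw [Nat.add_sub_cancel' (by omega), List.getD_append_right _ _ _ _ le_rfl,
    Nat.sub_self] at this
  simp at this

def OccursAbove (ν : List ℕ) (c : ℕ) (σ : List ℕ) : Prop :=
  ∃ j, WordIsoAt ν σ j ∧ FactorAbove c σ j ν.length

lemma occursAbove_iff_not_avoidsWord (h : ∀ x ∈ σ, c < x) :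
    OccursAbove ν c σ ↔ ¬ AvoidsWord ν σ := by
  simp only [OccursAbove, AvoidsWord, not_forall, not_not]
  exact exists_congr fun j => and_iff_left_of_imp fun hj => factorAbove_of_forall_lt h hj.1

lemma occursAbove_append_cons_iff :
    OccursAbove ν a (w ++ a :: ρ) ↔ OccursAbove ν a w ∨ OccursAbove ν a ρ := by
  constructor
  · rintro ⟨j, hiso, habove⟩
    rcases habove.le_or_le_of_append_cons with hj | hj
    · exact Or.inl ⟨j, (wordIsoAt_append_right_iff hj).1 hiso,
        (factorAbove_append_right_iff hj).1 habove⟩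
    · obtain ⟨j, rfl⟩ := Nat.exists_eq_add_of_le (by simpa using hj : (w ++ [a]).length ≤ j)
      rw [List.append_cons] at hiso habove
      exact Or.inr ⟨j, wordIsoAt_append_left_iff.1 hiso, factorAbove_append_left_iff.1 habove⟩
  · rintro (⟨j, hiso, habove⟩ | ⟨j, hiso, habove⟩)
    · exact ⟨j, hiso.append_right _, (factorAbove_append_right_iff hiso.1).2 habove⟩
    · rw [List.append_cons]
      exact ⟨_, wordIsoAt_append_left_iff.2 hiso, factorAbove_append_left_iff.2 habove⟩

def ShuffleBotOccursAt (τ ν σ : List ℕ) (i p j : ℕ) : Prop :=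
  WordIsoAt τ σ i ∧ i + τ.length ≤ p ∧ p + 1 ≤ j ∧ WordIsoAt ν σ j ∧
    FactorAbove (σ.getD p 0) σ i τ.length ∧ FactorAbove (σ.getD p 0) σ j ν.length

lemma shuffleBotOccurs_iff :
    ShuffleBotOccurs τ ν σ ↔ ∃ i p j, ShuffleBotOccursAt τ ν σ i p j :=
  Iff.rfl

lemma shuffleBotOccursAt_append_right_iff (h : j + ν.length ≤ w.length) :
    ShuffleBotOccursAt τ ν (w ++ l) i p j ↔ ShuffleBotOccursAt τ ν w i p j := by
  unfold ShuffleBotOccursAt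
  constructor
  · rintro ⟨hτ, hip, hpj, hν, hτa, hνa⟩
    rw [List.getD_append _ _ _ _ (by omega)] at hτa hνa
    exact ⟨(wordIsoAt_append_right_iff (by omega)).1 hτ, hip, hpj,
      (wordIsoAt_append_right_iff h).1 hν, (factorAbove_append_right_iff (by omega)).1 hτa,
      (factorAbove_append_right_iff h).1 hνa⟩
  · rintro ⟨hτ, hip, hpj, hν, hτa, hνa⟩
    rw [List.getD_append _ _ _ _ (by omega)]
    exact ⟨(wordIsoAt_append_right_iff (by omega)).2 hτ, hip, hpj,
      (wordIsoAt_append_right_iff h).2 hν, (factorAbove_append_right_iff (by omega)).2 hτa,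
      (factorAbove_append_right_iff h).2 hνa⟩

lemma shuffleBotOccursAt_append_left_iff :
    ShuffleBotOccursAt τ ν (l ++ ρ) (l.length + i) (l.length + p) (l.length + j) ↔
      ShuffleBotOccursAt τ ν ρ i p j := by
  simp only [ShuffleBotOccursAt, wordIsoAt_append_left_iff, factorAbove_append_left_iff,
    List.getD_append_length_add, Nat.add_assoc, Nat.add_le_add_iff_left]

lemma occursAbove_of_shuffleBotOccurs (hσ : ∀ x ∈ σ, a ≤ x) (h : ShuffleBotOccurs τ ν σ) :
    OccursAbove ν a σ := by
  obtain ⟨i, p, j, -, -, hpj, hν, -, hνa⟩ := shuffleBotOccurs_iff.1 h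
  exact ⟨j, hν, hνa.mono (hσ _ (List.getD_mem 0 (by have := hν.1; omega)))⟩

lemma not_shuffleBotOccurs_of_avoidsWord (h : AvoidsWord τ σ) :
    ¬ ShuffleBotOccurs τ ν σ :=
  fun ⟨i, _, _, hτ, _⟩ => h i hτ

lemma shuffleBotOccurs_append_cons_iff (hw : ∀ x ∈ w, a < x) (hρ : ∀ x ∈ ρ, a ≤ x) :
    ShuffleBotOccurs τ ν (w ++ a :: ρ) ↔
      ShuffleBotOccurs τ ν w ∨ ShuffleBotOccurs τ ν ρ ∨
        (¬ AvoidsWord τ w ∧ OccursAbove ν a ρ) := by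
  have hσ : ∀ x ∈ w ++ a :: ρ, a ≤ x := by
    simp only [List.mem_append, List.mem_cons]
    rintro x (hx | rfl | hx)
    exacts [(hw x hx).le, le_rfl, hρ x hx]
  have hmid : (w ++ a :: ρ).getD w.length 0 = a := by simp
  have hlen : (w ++ [a]).length = w.length + 1 := by simp
  simp only [shuffleBotOccurs_iff]
  constructor
  · rintro ⟨i, p, j, hocc⟩
    have ⟨hτ, hip, hpj, hν, hτa, hνa⟩ := hocc
    have hp : a ≤ (w ++ a :: ρ).getD p 0 := hσ _ (List.getD_mem 0 (by have := hν.1; omega))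
    rcases (hτa.mono hp).le_or_le_of_append_cons with hi | hi <;>
      rcases (hνa.mono hp).le_or_le_of_append_cons with hj | hj
    · exact Or.inl ⟨i, p, j, (shuffleBotOccursAt_append_right_iff hj).1 hocc⟩
    · refine Or.inr (Or.inr ⟨fun hav => hav i ((wordIsoAt_append_right_iff hi).1 hτ), ?_⟩)
      obtain ⟨j, rfl⟩ := Nat.exists_eq_add_of_le (hlen ▸ hj : (w ++ [a]).length ≤ j)
      have hνa := hνa.mono hp
      rw [List.append_cons] at hν hνa
      exact ⟨j, wordIsoAt_append_left_iff.1 hν, factorAbove_append_left_iff.1 hνa⟩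
    · omega
    · obtain ⟨i, rfl⟩ := Nat.exists_eq_add_of_le (hlen ▸ hi : (w ++ [a]).length ≤ i)
      obtain ⟨p, rfl⟩ := Nat.exists_eq_add_of_le (by omega : (w ++ [a]).length ≤ p)
      obtain ⟨j, rfl⟩ := Nat.exists_eq_add_of_le (by omega : (w ++ [a]).length ≤ j)
      rw [List.append_cons] at hocc
      exact Or.inr (Or.inl ⟨i, p, j, shuffleBotOccursAt_append_left_iff.1 hocc⟩)
  · rintro (⟨i, p, j, hocc⟩ | ⟨i, p, j, hocc⟩ | ⟨hτ, j, hν, hνa⟩)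
    · exact ⟨i, p, j, (shuffleBotOccursAt_append_right_iff hocc.2.2.2.1.1).2 hocc⟩
    · rw [List.append_cons]
      exact ⟨_, _, _, shuffleBotOccursAt_append_left_iff.2 hocc⟩
    · obtain ⟨i, hτ⟩ : ∃ i, WordIsoAt τ w i := by simpa [AvoidsWord] using hτ
      refine ⟨i, w.length, (w ++ [a]).length + j, hτ.append_right _, hτ.1, by omega, ?_, ?_, ?_⟩
      · rw [List.append_cons]
        exact wordIsoAt_append_left_iff.2 hν
      · rw [hmid, factorAbove_append_right_iff hτ.1]
        exact factorAbove_of_forall_lt hw hτ.1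
      · rw [hmid, List.append_cons, factorAbove_append_left_iff]
        exact hνa

end Occurrences

section FirstLetterDecomposition

variable {A : Finset ℕ} {a : ℕ} (τ ν : List ℕ)

lemma lt_of_mem_wordsOver_erase (hmin : ∀ x ∈ A, a ≤ x) {w : List ℕ}
    (hw : w ∈ wordsOver (A.erase a)) : ∀ x ∈ w, a < x := fun x hx =>
  (hmin x (Finset.mem_of_mem_erase (hw x hx))).lt_of_ne' (Finset.ne_of_mem_erase (hw x hx))

lemma wordsOver_inter_not_occursAbove (ha : a ∈ A) (hmin : ∀ x ∈ A, a ≤ x) :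
    wordsOver A ∩ {σ | ¬ OccursAbove ν a σ} =
      (wordsOver (A.erase a) ∩ {σ | AvoidsWord ν σ}) ∪
        Set.image2 (fun w ρ => w ++ a :: ρ) (wordsOver (A.erase a) ∩ {σ | AvoidsWord ν σ})
          (wordsOver A ∩ {σ | ¬ OccursAbove ν a σ}) := by
  have havoid {w} (hw : w ∈ wordsOver (A.erase a)) : ¬ OccursAbove ν a w ↔ AvoidsWord ν w := by
    rw [occursAbove_iff_not_avoidsWord (lt_of_mem_wordsOver_erase hmin hw), not_not]
  ext σ
  constructor
  · rintro ⟨hσ, hno⟩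
    rcases (wordsOver_eq_union ha ▸ hσ) with hσ | ⟨w, hw, ρ, hρ, rfl⟩
    · exact Or.inl ⟨hσ, (havoid hσ).1 hno⟩
    · rw [Set.mem_ofPred_eq, occursAbove_append_cons_iff, not_or, havoid hw] at hno
      exact Or.inr ⟨w, ⟨hw, hno.1⟩, ρ, ⟨hρ, hno.2⟩, rfl⟩
  · rintro (⟨hσ, hav⟩ | ⟨w, ⟨hw, hav⟩, ρ, ⟨hρ, hno⟩, rfl⟩)
    · exact ⟨(wordsOver_eq_union ha).symm ▸ Or.inl hσ, (havoid hσ).2 hav⟩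
    · refine ⟨(wordsOver_eq_union ha).symm ▸ Or.inr ⟨w, hw, ρ, hρ, rfl⟩, ?_⟩
      rw [Set.mem_ofPred_eq, occursAbove_append_cons_iff, not_or, havoid hw]
      exact ⟨hav, hno⟩

lemma wordsOver_inter_not_shuffleBotOccurs (ha : a ∈ A) (hmin : ∀ x ∈ A, a ≤ x) :
    wordsOver A ∩ {σ | ¬ ShuffleBotOccurs τ ν σ} =
      (wordsOver (A.erase a) ∩ {σ | ¬ ShuffleBotOccurs τ ν σ}) ∪
        (Set.image2 (fun w ρ => w ++ a :: ρ) (wordsOver (A.erase a) ∩ {σ | AvoidsWord τ σ})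
            (wordsOver A ∩ {σ | ¬ ShuffleBotOccurs τ ν σ}) ∪
          Set.image2 (fun w ρ => w ++ a :: ρ)
            ((wordsOver (A.erase a) ∩ {σ | ¬ ShuffleBotOccurs τ ν σ}) \
              (wordsOver (A.erase a) ∩ {σ | AvoidsWord τ σ}))
            (wordsOver A ∩ {σ | ¬ OccursAbove ν a σ})) := by
  have hsplit {w ρ} (hw : w ∈ wordsOver (A.erase a)) (hρ : ρ ∈ wordsOver A) :
      ¬ ShuffleBotOccurs τ ν (w ++ a :: ρ) ↔
        (AvoidsWord τ w ∧ ¬ ShuffleBotOccurs τ ν ρ) ∨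
          ((¬ ShuffleBotOccurs τ ν w ∧ ¬ AvoidsWord τ w) ∧ ¬ OccursAbove ν a ρ) := by
    have hρa : ∀ x ∈ ρ, a ≤ x := fun x hx => hmin x (hρ x hx)
    rw [shuffleBotOccurs_append_cons_iff (lt_of_mem_wordsOver_erase hmin hw) hρa]
    have := not_shuffleBotOccurs_of_avoidsWord (τ := τ) (ν := ν) (σ := w)
    have := occursAbove_of_shuffleBotOccurs (τ := τ) (ν := ν) hρa
    tauto
  ext σ
  constructor
  · rintro ⟨hσ, hno⟩
    rcases (wordsOver_eq_union ha ▸ hσ) with hσ | ⟨w, hw, ρ, hρ, rfl⟩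
    · exact Or.inl ⟨hσ, hno⟩
    · rcases (hsplit hw hρ).1 hno with ⟨hτ, hψ⟩ | ⟨⟨hψ, hτ⟩, hν⟩
      · exact Or.inr (Or.inl ⟨w, ⟨hw, hτ⟩, ρ, ⟨hρ, hψ⟩, rfl⟩)
      · exact Or.inr (Or.inr ⟨w, ⟨⟨hw, hψ⟩, fun h => hτ h.2⟩, ρ, ⟨hρ, hν⟩, rfl⟩)
  · rintro (⟨hσ, hno⟩ | ⟨w, ⟨hw, hτ⟩, ρ, ⟨hρ, hψ⟩, rfl⟩ | ⟨w, ⟨⟨hw, hψ⟩, hτ⟩, ρ, ⟨hρ, hν⟩, rfl⟩)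
    · exact ⟨(wordsOver_eq_union ha).symm ▸ Or.inl hσ, hno⟩
    · exact ⟨(wordsOver_eq_union ha).symm ▸ Or.inr ⟨w, hw, ρ, hρ, rfl⟩,
        (hsplit hw hρ).2 (Or.inl ⟨hτ, hψ⟩)⟩
    · exact ⟨(wordsOver_eq_union ha).symm ▸ Or.inr ⟨w, hw, ρ, hρ, rfl⟩,
        (hsplit hw hρ).2 (Or.inr ⟨⟨hψ, fun h => hτ ⟨hw, h⟩⟩, hν⟩)⟩

lemma wordGF_not_occursAbove (ha : a ∈ A) (hmin : ∀ x ∈ A, a ≤ x) :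
    wordGF (wordsOver A ∩ {σ | ¬ OccursAbove ν a σ}) =
      wordGF (wordsOver (A.erase a) ∩ {σ | AvoidsWord ν σ}) +
        X 0 ^ a * X 1 * (wordGF (wordsOver (A.erase a) ∩ {σ | AvoidsWord ν σ}) *
          wordGF (wordsOver A ∩ {σ | ¬ OccursAbove ν a σ})) := by
  conv_lhs => rw [wordsOver_inter_not_occursAbove ν ha hmin]
  rw [wordGF_union ((disjoint_wordsOver_erase_image2 _ _).mono_left Set.inter_subset_left),
    wordGF_image2_append_cons fun w hw => notMem_of_mem_wordsOver_erase hw.1]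

lemma wordGF_not_shuffleBotOccurs (ha : a ∈ A) (hmin : ∀ x ∈ A, a ≤ x) :
    wordGF (wordsOver A ∩ {σ | ¬ ShuffleBotOccurs τ ν σ}) =
      wordGF (wordsOver (A.erase a) ∩ {σ | ¬ ShuffleBotOccurs τ ν σ}) +
        X 0 ^ a * X 1 * (wordGF (wordsOver (A.erase a) ∩ {σ | AvoidsWord τ σ}) *
          wordGF (wordsOver A ∩ {σ | ¬ ShuffleBotOccurs τ ν σ})) +
        X 0 ^ a * X 1 * ((wordGF (wordsOver (A.erase a) ∩ {σ | ¬ ShuffleBotOccurs τ ν σ}) -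
            wordGF (wordsOver (A.erase a) ∩ {σ | AvoidsWord τ σ})) *
          wordGF (wordsOver A ∩ {σ | ¬ OccursAbove ν a σ})) := by
  have hnotMem {S : Set (List ℕ)} (hS : S ⊆ wordsOver (A.erase a)) : ∀ w ∈ S, a ∉ w :=
    fun w hw => notMem_of_mem_wordsOver_erase (hS hw)
  have hsub : wordsOver (A.erase a) ∩ {σ | AvoidsWord τ σ} ⊆
      wordsOver (A.erase a) ∩ {σ | ¬ ShuffleBotOccurs τ ν σ} :=
    fun σ hσ => ⟨hσ.1, not_shuffleBotOccurs_of_avoidsWord hσ.2⟩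
  conv_lhs => rw [wordsOver_inter_not_shuffleBotOccurs τ ν ha hmin]
  rw [wordGF_union (Disjoint.union_right
      ((disjoint_wordsOver_erase_image2 _ _).mono_left Set.inter_subset_left)
      ((disjoint_wordsOver_erase_image2 _ _).mono_left Set.inter_subset_left)),
    wordGF_union (disjoint_image2_append_cons (hnotMem Set.inter_subset_left)
      (hnotMem (Set.sdiff_subset.trans Set.inter_subset_left)) Set.disjoint_sdiff_right),
    wordGF_image2_append_cons (hnotMem Set.inter_subset_left),
    wordGF_image2_append_cons (hnotMem (Set.sdiff_subset.trans Set.inter_subset_left)),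
    wordGF_diff hsub, add_assoc]

end FirstLetterDecomposition

open MvPowerSeries in
theorem stmt6_general (τ ν : List ℕ) (A : Finset ℕ)
    (hA : A.Nonempty) (a1 : ℕ) (ha1 : a1 = A.min' hA) (A' : Finset ℕ)
    (hA' : A' = A.erase a1)
    (Cφ Cφ' Cτ' Cν' : MvPowerSeries (Fin 2) ℚ)
    (hCφ : ∀ n m : ℕ,
      (MvPowerSeries.coeff (R := ℚ) (Finsupp.single 0 n + Finsupp.single 1 m)) Cφ
        = (Set.ncard {σ : List ℕ | IsCompOf A n m σ ∧ ¬ ShuffleBotOccurs τ ν σ} : ℚ))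
    (hCφ' : ∀ n m : ℕ,
      (MvPowerSeries.coeff (R := ℚ) (Finsupp.single 0 n + Finsupp.single 1 m)) Cφ'
        = (Set.ncard {σ : List ℕ | IsCompOf A' n m σ ∧ ¬ ShuffleBotOccurs τ ν σ} : ℚ))
    (hCτ' : ∀ n m : ℕ,
      (MvPowerSeries.coeff (R := ℚ) (Finsupp.single 0 n + Finsupp.single 1 m)) Cτ'
        = (Set.ncard {σ : List ℕ | IsCompOf A' n m σ ∧ AvoidsWord τ σ} : ℚ))
    (hCν' : ∀ n m : ℕ,
      (MvPowerSeries.coeff (R := ℚ) (Finsupp.single 0 n + Finsupp.single 1 m)) Cν'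
        = (Set.ncard {σ : List ℕ | IsCompOf A' n m σ ∧ AvoidsWord ν σ} : ℚ)) :
    Cφ * (1 - (X 0 : MvPowerSeries (Fin 2) ℚ) ^ a1 * X 1 * Cτ')
        * (1 - (X 0 : MvPowerSeries (Fin 2) ℚ) ^ a1 * X 1 * Cν')
      = Cφ' - (X 0 : MvPowerSeries (Fin 2) ℚ) ^ a1 * X 1 * Cτ' * Cν' := by
  subst hA'
  have ha : a1 ∈ A := ha1 ▸ A.min'_mem hA
  have hmin : ∀ x ∈ A, a1 ≤ x := fun x hx => ha1 ▸ A.min'_le x hx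
  have hH := wordGF_not_occursAbove ν ha hmin
  have hΦ := wordGF_not_shuffleBotOccurs τ ν ha hmin
  rw [← eq_wordGF_of_coeff hCφ, ← eq_wordGF_of_coeff hCφ', ← eq_wordGF_of_coeff hCτ'] at hΦ
  rw [← eq_wordGF_of_coeff hCν'] at hH
  set z : MvPowerSeries (Fin 2) ℚ := X 0 ^ a1 * X 1
  linear_combination (1 - z * Cν') * hΦ + (z * Cφ' - z * Cτ') * hH

open MvPowerSeries in
theorem stmt6 (τ ν : List ℕ) (hτ : τ ≠ []) (hν : ν ≠ [])
    (hτpos : ∀ x ∈ τ, 0 < x) (hνpos : ∀ x ∈ ν, 0 < x)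
    (A : Finset ℕ) (hcard : 2 ≤ A.card) (hpos : ∀ a ∈ A, 0 < a)
    (hA : A.Nonempty) (a1 : ℕ) (ha1 : a1 = A.min' hA) (A' : Finset ℕ)
    (hA' : A' = A.erase a1)
    (Cφ Cφ' Cτ' Cν' : MvPowerSeries (Fin 2) ℚ)
    (hCφ : ∀ n m : ℕ,
      (MvPowerSeries.coeff (R := ℚ) (Finsupp.single 0 n + Finsupp.single 1 m)) Cφ
        = (Set.ncard {σ : List ℕ | IsCompOf A n m σ ∧ ¬ ShuffleBotOccurs τ ν σ} : ℚ))
    (hCφ' : ∀ n m : ℕ,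
      (MvPowerSeries.coeff (R := ℚ) (Finsupp.single 0 n + Finsupp.single 1 m)) Cφ'
        = (Set.ncard {σ : List ℕ | IsCompOf A' n m σ ∧ ¬ ShuffleBotOccurs τ ν σ} : ℚ))
    (hCτ' : ∀ n m : ℕ,
      (MvPowerSeries.coeff (R := ℚ) (Finsupp.single 0 n + Finsupp.single 1 m)) Cτ'
        = (Set.ncard {σ : List ℕ | IsCompOf A' n m σ ∧ AvoidsWord τ σ} : ℚ))
    (hCν' : ∀ n m : ℕ,
      (MvPowerSeries.coeff (R := ℚ) (Finsupp.single 0 n + Finsupp.single 1 m)) Cν'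
        = (Set.ncard {σ : List ℕ | IsCompOf A' n m σ ∧ AvoidsWord ν σ} : ℚ)) :
    Cφ * (1 - (X 0 : MvPowerSeries (Fin 2) ℚ) ^ a1 * X 1 * Cτ')
        * (1 - (X 0 : MvPowerSeries (Fin 2) ℚ) ^ a1 * X 1 * Cν')
      = Cφ' - (X 0 : MvPowerSeries (Fin 2) ℚ) ^ a1 * X 1 * Cτ' * Cν' :=
  stmt6_general τ ν A hA a1 ha1 A' hA' Cφ Cφ' Cτ' Cν' hCφ hCφ' hCτ' hCν'
end

section
/- Let τ and ν be nonempty words over the positive integers. Then the shuffle pattern τ-ℓ-ν is equivalent to the shuffle pattern ν-ℓ-τ, and the shuffle pattern τ-1-ν is equivalent to the shuffle pattern ν-1-τ; that is, for every finite set A of positive integers and all n, m ≥ 0 the corresponding avoiding sets in C_{n;m}^A have equal cardinalities. -/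
/-- An occurrence of the shuffle pattern `τ-ℓ-ν` (middle letter greater than all
letters of `τ` and `ν`) in `σ`. -/
def ShuffleTopOccurs (τ ν σ : List ℕ) : Prop :=
  ∃ i p j : ℕ, WordIsoAt τ σ i ∧ i + τ.length ≤ p ∧ p + 1 ≤ j ∧ WordIsoAt ν σ j ∧
    (∀ s : ℕ, s < τ.length → σ.getD (i + s) 0 < σ.getD p 0) ∧
    (∀ t : ℕ, t < ν.length → σ.getD (j + t) 0 < σ.getD p 0)

namespace ShufflePattern

section Lists

variable {α : Type*} {σ A B A' B' : List α} {x : α}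

lemma exists_eq_append_cons_notMem (h : x ∈ σ) : ∃ A B, σ = A ++ x :: B ∧ x ∉ A := by
  induction σ with
  | nil => simp at h
  | cons z σ ih =>
    by_cases hz : z = x
    · exact ⟨[], σ, by rw [hz]; rfl, List.not_mem_nil⟩
    · obtain ⟨A, B, rfl, hA⟩ := ih (by simpa [Ne.symm hz] using h)
      exact ⟨z :: A, B, rfl, by simp [Ne.symm hz, hA]⟩

lemma exists_eq_append_cons_getD (d : α) {p : ℕ} (hp : p < σ.length) :
    ∃ A B, σ = A ++ σ.getD p d :: B ∧ A.length = p :=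
  ⟨σ.take p, σ.drop (p + 1), by
    rw [List.getD_eq_getElem _ _ hp, ← List.drop_eq_getElem_cons hp, List.take_append_drop],
    by simp only [List.length_take]; omega⟩

lemma getD_append_cons_length (A B : List α) (y d : α) : (A ++ y :: B).getD A.length d = y := by
  rw [List.getD_append_right _ _ _ _ le_rfl, Nat.sub_self, List.getD_cons_zero]

lemma idxOf_append_cons [BEq α] [LawfulBEq α] (h : x ∉ A) :
    (A ++ x :: B).idxOf x = A.length := by
  simp [List.idxOf_append, h]

lemma append_cons_inj_of_notMem_left (hA : x ∉ A) (hA' : x ∉ A')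
    (h : A ++ x :: B = A' ++ x :: B') : A = A' ∧ B = B' := by
  classical
  have hlen : A.length = A'.length := by
    rw [← idxOf_append_cons (B := B) hA, ← idxOf_append_cons (B := B') hA', h]
  obtain ⟨rfl, hB⟩ := List.append_inj h hlen
  exact ⟨rfl, List.cons_injective hB⟩

lemma append_cons_inj_of_notMem_right (hB : x ∉ B) (hB' : x ∉ B')
    (h : A ++ x :: B = A' ++ x :: B') : A = A' ∧ B = B' := by
  have hrev := congrArg List.reverse h
  simp only [List.reverse_append, List.reverse_cons, List.append_assoc,
    List.singleton_append] at hrev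
  obtain ⟨hB, hA⟩ := append_cons_inj_of_notMem_left (by simpa) (by simpa) hrev
  exact ⟨List.reverse_injective hA, List.reverse_injective hB⟩

end Lists

def maxLetter (σ : List ℕ) : ℕ := σ.foldr max 0

lemma le_maxLetter {σ : List ℕ} {y : ℕ} (h : y ∈ σ) : y ≤ maxLetter σ :=
  List.le_max_of_le h le_rfl

lemma maxLetter_mem {σ : List ℕ} (h : σ ≠ []) : maxLetter σ ∈ σ :=
  List.maximum_mem (List.foldr_max_of_ne_nil h).symm

lemma _root_.List.Perm.maxLetter_eq {σ σ' : List ℕ} (h : σ.Perm σ') :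
    maxLetter σ = maxLetter σ' :=
  h.foldr_op_eq

def OccursBelowAt (w : List ℕ) (c : ℕ) (σ : List ℕ) (i : ℕ) : Prop :=
  WordIsoAt w σ i ∧ ∀ s, s < w.length → σ.getD (i + s) 0 < c

def OccursBelow (w : List ℕ) (c : ℕ) (σ : List ℕ) : Prop :=
  ∃ i, OccursBelowAt w c σ i

section OccursBelow

variable {w σ σ' A B : List ℕ} {c c' x i i' : ℕ}

lemma occursBelowAt_congr (hlen : i' + w.length ≤ σ'.length ↔ i + w.length ≤ σ.length)
    (h : ∀ s < w.length, σ'.getD (i' + s) 0 = σ.getD (i + s) 0) :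
    OccursBelowAt w c σ' i' ↔ OccursBelowAt w c σ i := by
  simp +contextual only [OccursBelowAt, WordIsoAt, hlen, h]

lemma occursBelowAt_append_iff_left (S : List ℕ) (hi : i + w.length ≤ A.length) :
    OccursBelowAt w c (A ++ S) i ↔ OccursBelowAt w c A i :=
  occursBelowAt_congr (by simp only [List.length_append, hi, iff_true]; omega)
    fun _ _ => List.getD_append _ _ _ _ (by omega)

lemma occursBelowAt_append_iff_right (P : List ℕ) (j : ℕ) :
    OccursBelowAt w c (P ++ B) (P.length + j) ↔ OccursBelowAt w c B j :=
  occursBelowAt_congr (by simp only [List.length_append]; omega) fun s _ => by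
    rw [List.getD_append_right _ _ _ _ (by omega), Nat.add_assoc, Nat.add_sub_cancel_left]

lemma OccursBelowAt.add_le_length (h : OccursBelowAt w c σ i) : i + w.length ≤ σ.length :=
  h.1.1

lemma OccursBelow.mono (hc : c ≤ c') (h : OccursBelow w c σ) : OccursBelow w c' σ :=
  let ⟨i, hiso, hlt⟩ := h
  ⟨i, hiso, fun s hs => (hlt s hs).trans_le hc⟩

lemma OccursBelow.append_right (S : List ℕ) (h : OccursBelow w c A) :
    OccursBelow w c (A ++ S) :=
  let ⟨i, hi⟩ := h
  ⟨i, (occursBelowAt_append_iff_left S hi.add_le_length).2 hi⟩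

lemma OccursBelow.append_left (P : List ℕ) (h : OccursBelow w c B) :
    OccursBelow w c (P ++ B) :=
  let ⟨j, hj⟩ := h
  ⟨P.length + j, (occursBelowAt_append_iff_right P j).2 hj⟩

/-- A factor with letters below `c ≤ x` cannot contain the letter `x`. -/
lemma occursBelow_append_cons_iff (hc : c ≤ x) :
    OccursBelow w c (A ++ x :: B) ↔ OccursBelow w c A ∨ OccursBelow w c B := by
  have hsplit : A ++ x :: B = (A ++ [x]) ++ B := by simp
  constructor
  · rintro ⟨i, hi⟩
    by_cases hleft : i + w.length ≤ A.length
    · exact Or.inl ⟨i, (occursBelowAt_append_iff_left _ hleft).1 hi⟩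
    by_cases hright : A.length + 1 ≤ i
    · refine Or.inr ⟨i - (A.length + 1), (occursBelowAt_append_iff_right (A ++ [x]) _).1 ?_⟩
      rwa [← hsplit, List.length_append, List.length_singleton, Nat.add_sub_cancel' hright]
    · have hx := hi.2 (A.length - i) (by omega)
      rw [Nat.add_sub_cancel' (by omega), List.getD_append_right _ _ _ _ le_rfl,
        Nat.sub_self, List.getD_cons_zero] at hx
      omega
  · rintro (h | h)
    · exact h.append_right _
    · exact hsplit ▸ h.append_left _

end OccursBelow

variable {τ ν σ σ' A B : List ℕ} {x : ℕ}

lemma shuffleTopOccurs_iff :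
    ShuffleTopOccurs τ ν σ ↔
      ∃ A y B, σ = A ++ y :: B ∧ OccursBelow τ y A ∧ OccursBelow ν y B := by
  constructor
  · rintro ⟨i, p, j, hτ, hip, hpj, hν, hlτ, hlν⟩
    obtain ⟨A, B, hσ, rfl⟩ := exists_eq_append_cons_getD 0 (by have := hν.1; omega : p < σ.length)
    refine ⟨A, _, B, hσ, ⟨i, ?_⟩, ⟨j - (A.length + 1), ?_⟩⟩
    · rw [← occursBelowAt_append_iff_left _ hip, ← hσ]
      exact ⟨hτ, hlτ⟩
    · rw [← occursBelowAt_append_iff_right (A ++ [_]), ← List.append_cons, ← hσ,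
        List.length_append, List.length_singleton, Nat.add_sub_cancel' hpj]
      exact ⟨hν, hlν⟩
  · rintro ⟨A, y, B, rfl, ⟨i, hi⟩, ⟨j, hj⟩⟩
    have hi' := (occursBelowAt_append_iff_left (y :: B) hi.add_le_length).2 hi
    have hj' := (occursBelowAt_append_iff_right (A ++ [y]) j).2 hj
    rw [← List.append_cons, List.length_append, List.length_singleton] at hj'
    refine ⟨i, A.length, A.length + 1 + j, hi'.1, hi.add_le_length, by omega, hj'.1, ?_, ?_⟩ <;>
      rw [getD_append_cons_length]
    exacts [hi'.2, hj'.2]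

lemma shuffleTopOccurs_append_cons_iff (hx : ∀ y ∈ A ++ x :: B, y ≤ x) :
    ShuffleTopOccurs τ ν (A ++ x :: B) ↔
      ShuffleTopOccurs τ ν A ∨ ShuffleTopOccurs τ ν B ∨
        (OccursBelow τ x A ∧ OccursBelow ν x B) := by
  constructor
  · rw [shuffleTopOccurs_iff]
    rintro ⟨A', y, B', heq, hτ, hν⟩
    have hy : y ≤ x := hx y (heq ▸ by simp)
    rcases List.append_eq_append_iff.1 heq with ⟨_ | ⟨z, C⟩, rfl, hC⟩ | ⟨_ | ⟨z, C⟩, rfl, hC⟩ <;>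
      simp only [List.nil_append, List.cons_append, List.cons.injEq, List.append_nil] at hC hτ ⊢
    · obtain ⟨rfl, rfl⟩ := hC
      exact Or.inr (Or.inr ⟨hτ, hν⟩)
    · obtain ⟨rfl, rfl⟩ := hC
      rcases (occursBelow_append_cons_iff hy).1 hτ with hτ | hτ
      · refine Or.inr (Or.inr ⟨hτ.mono hy, ?_⟩)
        rw [List.append_cons]
        exact (hν.append_left _).mono hy
      · exact Or.inr (Or.inl (shuffleTopOccurs_iff.2 ⟨C, y, B', rfl, hτ, hν⟩))
    · obtain ⟨rfl, rfl⟩ := hC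
      exact Or.inr (Or.inr ⟨hτ, hν⟩)
    · obtain ⟨rfl, rfl⟩ := hC
      rcases (occursBelow_append_cons_iff hy).1 hν with hν | hν
      · exact Or.inl (shuffleTopOccurs_iff.2 ⟨A', y, C, rfl, hτ, hν⟩)
      · exact Or.inr (Or.inr ⟨(hτ.append_right _).mono hy, hν.mono hy⟩)
  · rintro (h | h | ⟨hτ, hν⟩) <;> rw [shuffleTopOccurs_iff]
    · obtain ⟨A₁, y, A₂, rfl, hτ, hν⟩ := shuffleTopOccurs_iff.1 h
      exact ⟨A₁, y, A₂ ++ x :: B, by simp, hτ, hν.append_right _⟩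
    · obtain ⟨B₁, y, B₂, rfl, hτ, hν⟩ := shuffleTopOccurs_iff.1 h
      refine ⟨A ++ x :: B₁, y, B₂, by simp, ?_, hν⟩
      rw [List.append_cons]
      exact hτ.append_left _
    · exact ⟨A, x, B, rfl, hτ, hν⟩

def SplitsAtMax (τ ν σ : List ℕ) : Prop :=
  σ ≠ [] ∧ OccursBelow τ (maxLetter σ) σ ∧ OccursBelow ν (maxLetter σ) σ

open Classical in
noncomputable def swapAtMax (τ ν σ : List ℕ) : List ℕ :=
  if SplitsAtMax τ ν σ then
    swapAtMax τ ν (σ.drop (σ.idxOf (maxLetter σ) + 1)) ++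
      maxLetter σ :: swapAtMax τ ν (σ.take (σ.idxOf (maxLetter σ)))
  else σ
termination_by σ.length
decreasing_by
  · simp only [List.length_drop]
    have := List.length_pos_of_ne_nil ‹SplitsAtMax τ ν σ›.1
    omega
  · simp only [List.length_take]
    have := List.idxOf_lt_length_of_mem (maxLetter_mem ‹SplitsAtMax τ ν σ›.1)
    omega

lemma swapAtMax_of_not_splitsAtMax (h : ¬ SplitsAtMax τ ν σ) : swapAtMax τ ν σ = σ := by
  rw [swapAtMax, if_neg h]

lemma swapAtMax_append_cons (h : SplitsAtMax τ ν (A ++ x :: B))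
    (hx : maxLetter (A ++ x :: B) = x) (hA : x ∉ A) :
    swapAtMax τ ν (A ++ x :: B) = swapAtMax τ ν B ++ x :: swapAtMax τ ν A := by
  rw [swapAtMax, if_pos h, hx, idxOf_append_cons hA, List.take_left' rfl,
    List.drop_length_add_append, List.drop_succ_cons, List.drop_zero]

theorem swapAtMax_induction {motive : List ℕ → Prop}
    (fixed : ∀ σ, ¬ SplitsAtMax τ ν σ → motive σ)
    (split : ∀ A x B, SplitsAtMax τ ν (A ++ x :: B) → maxLetter (A ++ x :: B) = x → x ∉ A →
      motive A → motive B → motive (A ++ x :: B))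
    (σ : List ℕ) : motive σ := by
  by_cases h : SplitsAtMax τ ν σ
  · obtain ⟨A, B, hσ, hA⟩ := exists_eq_append_cons_notMem (maxLetter_mem h.1)
    have : A.length < σ.length ∧ B.length < σ.length := by
      rw [hσ, List.length_append, List.length_cons]; omega
    rw [hσ]
    exact split A _ B (by rwa [← hσ]) (by rw [← hσ]) hA
      (swapAtMax_induction fixed split A) (swapAtMax_induction fixed split B)
  · exact fixed σ h
termination_by σ.length

lemma ShuffleTopOccurs.splitsAtMax (h : ShuffleTopOccurs τ ν σ) : SplitsAtMax τ ν σ := by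
  obtain ⟨A, y, B, rfl, hτ, hν⟩ := shuffleTopOccurs_iff.1 h
  have hy : y ≤ maxLetter (A ++ y :: B) := le_maxLetter (by simp)
  refine ⟨by simp, (hτ.append_right _).mono hy, ?_⟩
  rw [List.append_cons] at hy ⊢
  exact (hν.append_left _).mono hy

lemma SplitsAtMax.symm (h : SplitsAtMax τ ν σ) : SplitsAtMax ν τ σ :=
  ⟨h.1, h.2.2, h.2.1⟩

lemma swapAtMax_perm (σ : List ℕ) : (swapAtMax τ ν σ).Perm σ := by
  induction σ using swapAtMax_induction (τ := τ) (ν := ν) with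
  | fixed σ h => rw [swapAtMax_of_not_splitsAtMax h]
  | split A x B h hx hA ihA ihB =>
    rw [swapAtMax_append_cons h hx hA]
    exact (ihB.append (ihA.cons x)).trans (List.perm_append_comm.trans List.perm_middle.symm)

lemma maxLetter_swapAtMax (σ : List ℕ) : maxLetter (swapAtMax τ ν σ) = maxLetter σ :=
  (swapAtMax_perm σ).maxLetter_eq

lemma le_maxLetter_of_mem_swapAtMax {y : ℕ} (h : y ∈ swapAtMax τ ν σ) : y ≤ maxLetter σ :=
  maxLetter_swapAtMax (τ := τ) (ν := ν) σ ▸ le_maxLetter h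

/-- Above the pivot both sides hold, since only words splitting at their maximum are
moved; this is why `w` must be `τ` or `ν`. -/
lemma occursBelow_swapAtMax {w : List ℕ} (hw : w = τ ∨ w = ν) (c : ℕ) (σ : List ℕ) :
    OccursBelow w c (swapAtMax τ ν σ) ↔ OccursBelow w c σ := by
  induction σ using swapAtMax_induction (τ := τ) (ν := ν) generalizing c with
  | fixed σ h => rw [swapAtMax_of_not_splitsAtMax h]
  | split A x B h hx hA ihA ihB =>
    have below : ∀ c ≤ x, OccursBelow w c (swapAtMax τ ν (A ++ x :: B)) ↔
        OccursBelow w c (A ++ x :: B) := fun c hc => by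
      rw [swapAtMax_append_cons h hx hA, occursBelow_append_cons_iff hc,
        occursBelow_append_cons_iff hc, ihA, ihB, or_comm]
    rcases le_or_gt c x with hc | hc
    · exact below c hc
    · have hwx : OccursBelow w x (A ++ x :: B) := by
        have hτν := h.2
        rw [hx] at hτν
        rcases hw with rfl | rfl
        exacts [hτν.1, hτν.2]
      exact iff_of_true (((below x le_rfl).2 hwx).mono hc.le) (hwx.mono hc.le)

lemma splitsAtMax_swapAtMax_iff : SplitsAtMax τ ν (swapAtMax τ ν σ) ↔ SplitsAtMax τ ν σ := by
  rw [SplitsAtMax, SplitsAtMax, maxLetter_swapAtMax, occursBelow_swapAtMax (Or.inl rfl),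
    occursBelow_swapAtMax (Or.inr rfl), ne_eq, ← List.length_eq_zero_iff,
    (swapAtMax_perm σ).length_eq, List.length_eq_zero_iff]

theorem shuffleTopOccurs_swapAtMax (σ : List ℕ) :
    ShuffleTopOccurs ν τ (swapAtMax τ ν σ) ↔ ShuffleTopOccurs τ ν σ := by
  induction σ using swapAtMax_induction (τ := τ) (ν := ν) with
  | fixed σ h =>
    rw [swapAtMax_of_not_splitsAtMax h]
    exact iff_of_false (fun h' => h (ShuffleTopOccurs.splitsAtMax h').symm)
      (fun h' => h (ShuffleTopOccurs.splitsAtMax h'))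
  | split A x B h hx hA ihA ihB =>
    have hσ : ∀ y ∈ A ++ x :: B, y ≤ x := fun y hy => hx ▸ le_maxLetter hy
    have hswap := swapAtMax_append_cons h hx hA
    have hσ' : ∀ y ∈ swapAtMax τ ν B ++ x :: swapAtMax τ ν A, y ≤ x :=
      fun y hy => hx ▸ le_maxLetter_of_mem_swapAtMax (hswap ▸ hy)
    rw [hswap, shuffleTopOccurs_append_cons_iff hσ', shuffleTopOccurs_append_cons_iff hσ, ihA, ihB,
      occursBelow_swapAtMax (Or.inl rfl), occursBelow_swapAtMax (Or.inr rfl)]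
    tauto

lemma SplitsAtMax.exists_swapAtMax_eq (h : SplitsAtMax τ ν σ) :
    ∃ A B, σ = A ++ maxLetter σ :: B ∧ maxLetter σ ∉ A ∧
      swapAtMax τ ν σ = swapAtMax τ ν B ++ maxLetter σ :: swapAtMax τ ν A := by
  obtain ⟨A, B, hσ, hA⟩ := exists_eq_append_cons_notMem (maxLetter_mem h.1)
  have := swapAtMax_append_cons (τ := τ) (ν := ν) (by rwa [← hσ]) (by rw [← hσ]) hA
  rw [← hσ] at this
  exact ⟨A, B, hσ, hA, this⟩

theorem swapAtMax_injective : Function.Injective (swapAtMax τ ν) := by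
  intro σ σ' heq
  induction σ using swapAtMax_induction (τ := τ) (ν := ν) generalizing σ' with
  | fixed σ h =>
    have h' : ¬ SplitsAtMax τ ν σ' := by
      rwa [← splitsAtMax_swapAtMax_iff, ← heq, splitsAtMax_swapAtMax_iff]
    rwa [swapAtMax_of_not_splitsAtMax h, swapAtMax_of_not_splitsAtMax h'] at heq
  | split A x B h hx hA ihA ihB =>
    have h' : SplitsAtMax τ ν σ' := by
      rwa [← splitsAtMax_swapAtMax_iff, ← heq, splitsAtMax_swapAtMax_iff]
    have hx' : maxLetter σ' = x := by
      rw [← maxLetter_swapAtMax (τ := τ) (ν := ν), ← heq, maxLetter_swapAtMax, hx]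
    obtain ⟨A', B', hσ', hA', heq'⟩ := h'.exists_swapAtMax_eq
    rw [hx'] at hσ' hA' heq'
    rw [swapAtMax_append_cons h hx hA, heq'] at heq
    have notMem : ∀ {C}, x ∉ C → x ∉ swapAtMax τ ν C := fun hC hmem =>
      hC ((swapAtMax_perm _).subset hmem)
    obtain ⟨hB, hA⟩ := append_cons_inj_of_notMem_right (notMem hA) (notMem hA') heq
    rw [hσ', ihA hA, ihB hB]

theorem swapAtMax_surjective : Function.Surjective (swapAtMax τ ν) := by
  intro ζ
  have hfin : {σ : List ℕ | σ.Perm ζ}.Finite :=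
    ζ.permutations.finite_toSet.subset fun σ hσ => List.mem_permutations.2 hσ
  have hmaps : Set.MapsTo (swapAtMax τ ν) {σ | σ.Perm ζ} {σ | σ.Perm ζ} :=
    fun σ hσ => (swapAtMax_perm σ).trans hσ
  obtain ⟨σ, -, hσ⟩ := ((hfin.injOn_iff_bijOn_of_mapsTo hmaps).1
    swapAtMax_injective.injOn).surjOn (List.Perm.refl ζ)
  exact ⟨σ, hσ⟩

theorem ncard_not_shuffleTopOccurs_comm {P : List ℕ → Prop}
    (hP : ∀ σ σ' : List ℕ, σ.Perm σ' → (P σ ↔ P σ')) :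
    {σ | P σ ∧ ¬ ShuffleTopOccurs τ ν σ}.ncard = {σ | P σ ∧ ¬ ShuffleTopOccurs ν τ σ}.ncard := by
  have himage : swapAtMax τ ν '' {σ | P σ ∧ ¬ ShuffleTopOccurs τ ν σ} =
      {σ | P σ ∧ ¬ ShuffleTopOccurs ν τ σ} := by
    ext ζ
    obtain ⟨σ, rfl⟩ := swapAtMax_surjective (τ := τ) (ν := ν) ζ
    rw [swapAtMax_injective.mem_set_image, Set.mem_ofPred_eq, Set.mem_ofPred_eq,
      hP _ _ (swapAtMax_perm σ), shuffleTopOccurs_swapAtMax]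
  rw [← himage, swapAtMax_injective.injOn.ncard_image]

section Complement

variable {c : ℕ} {w : List ℕ}

lemma getD_le_of_forall_le (h : ∀ y ∈ σ, y ≤ c) (k : ℕ) : σ.getD k 0 ≤ c := by
  rcases lt_or_ge k σ.length with hk | hk
  · exact h _ (List.getD_eq_getElem _ _ hk ▸ List.getElem_mem hk)
  · rw [List.getD_eq_default _ _ hk]
    exact c.zero_le

lemma getD_map_sub {k : ℕ} (hk : k < σ.length) : (σ.map (c - ·)).getD k 0 = c - σ.getD k 0 := by
  rw [List.getD_eq_getElem _ _ (by simpa using hk), List.getD_eq_getElem _ _ hk, List.getElem_map]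

lemma getD_lt_getD_iff_map_sub (hσ : ∀ y ∈ σ, y ≤ c) {k k' : ℕ} (hk : k < σ.length)
    (hk' : k' < σ.length) :
    σ.getD k 0 < σ.getD k' 0 ↔ (σ.map (c - ·)).getD k' 0 < (σ.map (c - ·)).getD k 0 := by
  rw [getD_map_sub hk, getD_map_sub hk', tsub_lt_tsub_iff_left_of_le (getD_le_of_forall_le hσ k')]

lemma wordIsoAt_map_sub_iff (hw : ∀ y ∈ w, y ≤ c) (hσ : ∀ y ∈ σ, y ≤ c) {i : ℕ} :
    WordIsoAt (w.map (c - ·)) (σ.map (c - ·)) i ↔ WordIsoAt w σ i := by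
  simp only [WordIsoAt, List.length_map]
  refine and_congr_right fun hb => ?_
  have key : ∀ s t, s < w.length → t < w.length →
      (((w.map (c - ·)).getD s 0 < (w.map (c - ·)).getD t 0 ↔
        (σ.map (c - ·)).getD (i + s) 0 < (σ.map (c - ·)).getD (i + t) 0) ↔
      (w.getD t 0 < w.getD s 0 ↔ σ.getD (i + t) 0 < σ.getD (i + s) 0)) := fun s t hs ht => by
    rw [getD_lt_getD_iff_map_sub hw ht hs, getD_lt_getD_iff_map_sub hσ (by omega) (by omega)]
  exact ⟨fun h s t hs ht => (key t s ht hs).1 (h t s ht hs),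
    fun h s t hs ht => (key s t hs ht).2 (h t s ht hs)⟩

theorem shuffleBotOccurs_iff_map_sub (hτ : ∀ y ∈ τ, y ≤ c) (hν : ∀ y ∈ ν, y ≤ c)
    (hσ : ∀ y ∈ σ, y ≤ c) :
    ShuffleBotOccurs τ ν σ ↔
      ShuffleTopOccurs (τ.map (c - ·)) (ν.map (c - ·)) (σ.map (c - ·)) := by
  simp only [ShuffleBotOccurs, ShuffleTopOccurs, List.length_map, wordIsoAt_map_sub_iff hτ hσ,
    wordIsoAt_map_sub_iff hν hσ]
  refine exists₃_congr fun i p j => and_congr_right fun hτi => and_congr_right fun hip =>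
    and_congr_right fun hpj => and_congr_right fun hνj =>
      and_congr (forall₂_congr fun s hs => ?_) (forall₂_congr fun t ht => ?_)
  all_goals
    have := hτi.1
    have := hνj.1
    exact getD_lt_getD_iff_map_sub hσ (by omega) (by omega)

lemma map_sub_map_sub (hσ : ∀ y ∈ σ, y ≤ c) : (σ.map (c - ·)).map (c - ·) = σ := by
  rw [List.map_map]
  conv_rhs => rw [← List.map_id σ]
  exact List.map_congr_left fun y hy => Nat.sub_sub_self (hσ y hy)

end Complement

section Counting

variable {P : List ℕ → Prop} {c : ℕ}

theorem ncard_not_shuffleBotOccurs_eq_map_sub (hP : ∀ σ, P σ → ∀ y ∈ σ, y ≤ c)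
    (hτ : ∀ y ∈ τ, y ≤ c) (hν : ∀ y ∈ ν, y ≤ c) :
    {σ | P σ ∧ ¬ ShuffleBotOccurs τ ν σ}.ncard =
      {ζ | ((∀ y ∈ ζ, y ≤ c) ∧ P (ζ.map (c - ·))) ∧
        ¬ ShuffleTopOccurs (τ.map (c - ·)) (ν.map (c - ·)) ζ}.ncard := by
  have hinj : Set.InjOn (List.map (c - ·)) {σ | P σ ∧ ¬ ShuffleBotOccurs τ ν σ} :=
    fun σ hσ σ' hσ' h => by
      rw [← map_sub_map_sub (hP σ hσ.1), h, map_sub_map_sub (hP σ' hσ'.1)]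
  rw [← hinj.ncard_image]
  congr 1
  ext ζ
  constructor
  · rintro ⟨σ, ⟨hPσ, hbot⟩, rfl⟩
    rw [shuffleBotOccurs_iff_map_sub hτ hν (hP σ hPσ)] at hbot
    refine ⟨⟨by simp, ?_⟩, hbot⟩
    rwa [map_sub_map_sub (hP σ hPσ)]
  · rintro ⟨⟨hζ, hPζ⟩, htop⟩
    refine ⟨ζ.map (c - ·), ⟨hPζ, ?_⟩, map_sub_map_sub hζ⟩
    rwa [shuffleBotOccurs_iff_map_sub hτ hν (hP _ hPζ), map_sub_map_sub hζ]

theorem ncard_not_shuffleBotOccurs_comm (hP : ∀ σ σ' : List ℕ, σ.Perm σ' → (P σ ↔ P σ'))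
    (hPc : ∀ σ, P σ → ∀ y ∈ σ, y ≤ c) (hτ : ∀ y ∈ τ, y ≤ c) (hν : ∀ y ∈ ν, y ≤ c) :
    {σ | P σ ∧ ¬ ShuffleBotOccurs τ ν σ}.ncard = {σ | P σ ∧ ¬ ShuffleBotOccurs ν τ σ}.ncard := by
  rw [ncard_not_shuffleBotOccurs_eq_map_sub hPc hτ hν,
    ncard_not_shuffleBotOccurs_eq_map_sub hPc hν hτ]
  exact ncard_not_shuffleTopOccurs_comm fun σ σ' h =>
    and_congr (forall_congr' fun y => imp_congr_left h.mem_iff) (hP _ _ (h.map _))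

end Counting

end ShufflePattern

lemma IsCompOf.perm {A : Finset ℕ} {n m : ℕ} {σ σ' : List ℕ} (h : σ.Perm σ')
    (hσ : IsCompOf A n m σ) : IsCompOf A n m σ' :=
  ⟨fun x hx => hσ.1 x (h.mem_iff.2 hx), h.sum_eq ▸ hσ.2.1, h.length_eq ▸ hσ.2.2⟩

theorem stmt8_general (τ ν : List ℕ) :
    ∀ (A : Finset ℕ), (∀ a ∈ A, 0 < a) → ∀ n m : ℕ,
      (Set.ncard {σ : List ℕ | IsCompOf A n m σ ∧ ¬ ShuffleTopOccurs τ ν σ}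
        = Set.ncard {σ : List ℕ | IsCompOf A n m σ ∧ ¬ ShuffleTopOccurs ν τ σ}) ∧
      (Set.ncard {σ : List ℕ | IsCompOf A n m σ ∧ ¬ ShuffleBotOccurs τ ν σ}
        = Set.ncard {σ : List ℕ | IsCompOf A n m σ ∧ ¬ ShuffleBotOccurs ν τ σ}) := by
  intro A _ n m
  have hperm : ∀ σ σ' : List ℕ, σ.Perm σ' → (IsCompOf A n m σ ↔ IsCompOf A n m σ') :=
    fun σ σ' h => ⟨IsCompOf.perm h, IsCompOf.perm h.symm⟩
  set c := A.sup id ⊔ ShufflePattern.maxLetter (τ ++ ν)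
  have hA : ∀ σ, IsCompOf A n m σ → ∀ y ∈ σ, y ≤ c := fun σ hσ y hy =>
    le_sup_of_le_left (Finset.le_sup (f := id) (hσ.1 y hy))
  have hτν : ∀ y ∈ τ ++ ν, y ≤ c := fun y hy => le_sup_of_le_right (ShufflePattern.le_maxLetter hy)
  exact ⟨ShufflePattern.ncard_not_shuffleTopOccurs_comm hperm,
    ShufflePattern.ncard_not_shuffleBotOccurs_comm hperm hA
      (fun y hy => hτν y (List.mem_append_left _ hy))
      (fun y hy => hτν y (List.mem_append_right _ hy))⟩

theorem stmt8 (τ ν : List ℕ) (hτ : τ ≠ []) (hν : ν ≠ [])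
    (hτpos : ∀ x ∈ τ, 0 < x) (hνpos : ∀ x ∈ ν, 0 < x) :
    ∀ (A : Finset ℕ), (∀ a ∈ A, 0 < a) → ∀ n m : ℕ,
      (Set.ncard {σ : List ℕ | IsCompOf A n m σ ∧ ¬ ShuffleTopOccurs τ ν σ}
        = Set.ncard {σ : List ℕ | IsCompOf A n m σ ∧ ¬ ShuffleTopOccurs ν τ σ}) ∧
      (Set.ncard {σ : List ℕ | IsCompOf A n m σ ∧ ¬ ShuffleBotOccurs τ ν σ}
        = Set.ncard {σ : List ℕ | IsCompOf A n m σ ∧ ¬ ShuffleBotOccurs ν τ σ}) :=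
  stmt8_general τ ν
end
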